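/- Let (X,d) be a finite ultrametric and α > 1 its representation as an α-HST with tree T and labels ℓ. Suppose points of X arrive in some order, and the online algorithm connects each arriving point v (other than the first) to the earliest-arrived point u among all nearest neighbors of v in the current point set, producing a spanning tree H. Then for every pair of points u,v ∈ X, d_H(u,v) ≤ 2·(α/(α−1))·d(u,v). -/

import Mathlib

/-!
A ball `{j | d j x ≤ r}` of the ultrametric is the leaf set of an HST node, and its center is its
earliest point `c`, i.e. `IsLeast {j | d j x ≤ r} c`. Every point of an ultrametric ball is a
center of it, so following parent pointers from `x` stays in the ball and ends at `c`. Along this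
chain the edge lengths strictly increase (a tie would contradict the earliest-nearest rule), hence
grow by a factor `α`, and the path has length at most `r (1 + 1/α + 1/α² + ⋯) = α/(α-1) · r`.
Both `u` and `v` lie in the ball of radius `d u v` around `u`; joining their paths to its center
gives `2 · α/(α-1) · d u v`.
-/

/-- Weight of a path with respect to a real-valued weight function on pairs. -/
noncomputable def rPath {V : Type*} (w : V → V → ℝ) : List V → ℝ
  | [] => 0
  | [_] => 0
  | a :: b :: rest => w a b + rPath w (b :: rest)

section Paths

variable {V : Type*}

def IsChainPath (R : V → V → Prop) (a b : V) (p : List V) : Prop :=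
  p.head? = some a ∧ p.getLast? = some b ∧ p.IsChain R

theorem IsChainPath.cons {R : V → V → Prop} {a b c : V} {p : List V}
    (hp : IsChainPath R b c p) (hab : R a b) : IsChainPath R a c (a :: p) := by
  obtain ⟨t, rfl⟩ := List.head?_eq_some_iff.1 hp.1
  exact ⟨rfl, hp.2.1, hp.2.2.cons_cons hab⟩

variable (w : V → V → ℝ)

theorem rPath_cons_of_head? {a b : V} {p : List V} (hp : p.head? = some b) :
    rPath w (a :: p) = w a b + rPath w p := by
  obtain ⟨t, rfl⟩ := List.head?_eq_some_iff.1 hp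
  rfl

theorem rPath_append_cons (c : V) (s : List V) :
    ∀ p : List V, rPath w (p ++ c :: s) = rPath w (p ++ [c]) + rPath w (c :: s)
  | [] => by simp [rPath]
  | [a] => by simp [rPath]
  | a :: b :: t => by
    show w a b + rPath w (b :: t ++ c :: s) = w a b + rPath w (b :: t ++ [c]) + rPath w (c :: s)
    rw [rPath_append_cons c s (b :: t)]
    ring

theorem rPath_reverse (hw : ∀ a b, w a b = w b a) : ∀ p : List V, rPath w p.reverse = rPath w p
  | [] => rfl
  | [_] => rfl
  | a :: b :: t => by
    rw [List.reverse_cons, List.reverse_cons, List.append_assoc, List.singleton_append,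
      rPath_append_cons, ← List.reverse_cons, rPath_reverse hw (b :: t)]
    simp only [rPath, hw b a]
    ring

theorem IsChainPath.exists_join {R : V → V → Prop} (hR : ∀ x y, R x y → R y x)
    (hw : ∀ a b, w a b = w b a) {a b c : V} {p q : List V} (hp : IsChainPath R a c p)
    (hq : IsChainPath R b c q) :
    ∃ s, IsChainPath R a b s ∧ rPath w s = rPath w p + rPath w q := by
  obtain ⟨p₀, rfl⟩ := List.getLast?_eq_some_iff.1 hp.2.1
  obtain ⟨q₀, rfl⟩ := List.getLast?_eq_some_iff.1 hq.2.1
  have hqrev : c :: q₀.reverse = (q₀ ++ [c]).reverse := by simp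
  refine ⟨p₀ ++ c :: q₀.reverse, ⟨?_, ?_, ?_⟩, ?_⟩
  · cases p₀ <;> simpa using hp.1
  · rw [List.getLast?_append_cons, hqrev, List.getLast?_reverse]
    exact hq.1
  · rw [List.isChain_split, hqrev, List.isChain_reverse]
    exact ⟨hp.2.2, hq.2.2.imp fun x y => hR x y⟩
  · rw [rPath_append_cons, hqrev, rPath_reverse w hw]

end Paths

section Ultrametric

variable {V : Type*} {d : V → V → ℝ}

theorem nonneg_of_ultrametric (hsymm : ∀ u v, d u v = d v u) (hself : ∀ u, d u u = 0)
    (hult : ∀ x y z, d x z ≤ max (d x y) (d y z)) (x y : V) : 0 ≤ d x y := by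
  simpa [hself, hsymm y x] using hult x y x

theorem setOf_le_eq_of_le (hsymm : ∀ u v, d u v = d v u)
    (hult : ∀ x y z, d x z ≤ max (d x y) (d y z)) {x y : V} {r : ℝ} (hyx : d y x ≤ r) :
    {j | d j y ≤ r} = {j | d j x ≤ r} := by
  ext j
  exact ⟨fun hj => (hult j y x).trans (max_le hj hyx),
    fun hj => (hult j x y).trans (max_le hj ((hsymm x y).trans_le hyx))⟩

end Ultrametric

section OnlineTree

variable {n : ℕ}

def parentAdj (parent : Fin n → Fin n) (x y : Fin n) : Prop :=
  (0 < (x : ℕ) ∧ parent x = y) ∨ (0 < (y : ℕ) ∧ parent y = x)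

def IsEarliestNearestParent (d : Fin n → Fin n → ℝ) (parent : Fin n → Fin n) : Prop :=
  ∀ i : Fin n, 0 < (i : ℕ) →
    parent i < i ∧ (∀ j : Fin n, j < i → d (parent i) i ≤ d j i) ∧
      (∀ j : Fin n, j < i → d j i = d (parent i) i → parent i ≤ j)

variable {d : Fin n → Fin n → ℝ} {parent : Fin n → Fin n}

theorem dist_parent_lt_dist_parent_parent (hult : ∀ x y z, d x z ≤ max (d x y) (d y z))
    (hpar : IsEarliestNearestParent d parent) {x : Fin n} (hx : 0 < (x : ℕ))
    (hpx : 0 < (parent x : ℕ)) : d (parent x) x < d (parent (parent x)) (parent x) := by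
  obtain ⟨hlt, hnear, hearliest⟩ := hpar x hx
  have hlt₂ : parent (parent x) < x := (hpar (parent x) hpx).1.trans hlt
  by_contra! hle
  -- otherwise `parent (parent x)` would be an earlier nearest neighbour of `x`
  have heq : d (parent (parent x)) x = d (parent x) x :=
    le_antisymm ((hult _ (parent x) x).trans (max_le hle le_rfl)) (hnear _ hlt₂)
  exact (hearliest _ hlt₂ heq).not_gt (hpar (parent x) hpx).1

-- The first edge is carried along so that the geometric-series bound becomes inductive.
theorem exists_parentAdj_path_to_isLeast_of_lt (hsymm : ∀ u v, d u v = d v u)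
    (hpos : ∀ u v, u ≠ v → 0 < d u v) (hult : ∀ x y z, d x z ≤ max (d x y) (d y z))
    {α : ℝ} (hα : 1 < α)
    (hHST : ∀ u v x y, 0 < d u v → 0 < d x y → d u v < d x y → α * d u v ≤ d x y)
    (hpar : IsEarliestNearestParent d parent) {c : Fin n} {r : ℝ} (x : Fin n)
    (hc : IsLeast {j | d j x ≤ r} c) (hcx : c < x) :
    ∃ p, IsChainPath (parentAdj parent) x c p ∧
      (α - 1) * rPath d p + d (parent x) x ≤ α * r := by
  induction x using WellFoundedLT.induction with
  | _ x ih =>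
  have hx : 0 < (x : ℕ) := (Nat.zero_le _).trans_lt hcx
  obtain ⟨hlt, hnear, -⟩ := hpar x hx
  have hm : d (parent x) x ≤ r := (hnear c hcx).trans hc.1
  have hc' : IsLeast {j | d j (parent x) ≤ r} c := by rwa [setOf_le_eq_of_le hsymm hult hm]
  rcases (hc.2 hm).eq_or_lt with rfl | hcpx
  · refine ⟨[x, parent x], ⟨rfl, rfl, List.isChain_pair.2 (Or.inl ⟨hx, rfl⟩)⟩, ?_⟩
    have hw : (α - 1) * rPath d [x, parent x] + d (parent x) x = α * d (parent x) x := by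
      simp only [rPath, hsymm x]
      ring
    rw [hw]
    exact mul_le_mul_of_nonneg_left hm (by linarith)
  · obtain ⟨q, hq, hqw⟩ := ih _ hlt hc' hcpx
    have hpx : 0 < (parent x : ℕ) := (Nat.zero_le _).trans_lt hcpx
    have hgrow : α * d (parent x) x ≤ d (parent (parent x)) (parent x) :=
      hHST _ _ _ _ (hpos _ _ hlt.ne) (hpos _ _ (hpar _ hpx).1.ne)
        (dist_parent_lt_dist_parent_parent hult hpar hx hpx)
    refine ⟨x :: q, hq.cons (Or.inl ⟨hx, rfl⟩), ?_⟩
    rw [rPath_cons_of_head? d hq.1, hsymm x]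
    linarith

theorem exists_parentAdj_path_to_isLeast (hsymm : ∀ u v, d u v = d v u)
    (hself : ∀ u, d u u = 0) (hpos : ∀ u v, u ≠ v → 0 < d u v)
    (hult : ∀ x y z, d x z ≤ max (d x y) (d y z)) {α : ℝ} (hα : 1 < α)
    (hHST : ∀ u v x y, 0 < d u v → 0 < d x y → d u v < d x y → α * d u v ≤ d x y)
    (hpar : IsEarliestNearestParent d parent) {c : Fin n} {r : ℝ} (x : Fin n)
    (hc : IsLeast {j | d j x ≤ r} c) (hcx : c ≤ x) :
    ∃ p, IsChainPath (parentAdj parent) x c p ∧ rPath d p ≤ α / (α - 1) * r := by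
  rcases hcx.eq_or_lt with rfl | hcx
  · refine ⟨[c], ⟨rfl, rfl, List.isChain_singleton c⟩, ?_⟩
    have hr : 0 ≤ r := (hself c).symm.trans_le hc.1
    exact mul_nonneg (div_nonneg (by linarith) (by linarith)) hr
  · obtain ⟨p, hp, hpw⟩ :=
      exists_parentAdj_path_to_isLeast_of_lt hsymm hpos hult hα hHST hpar x hc hcx
    have hedge : 0 < d (parent x) x :=
      hpos _ _ (hpar x ((Nat.zero_le _).trans_lt hcx)).1.ne
    refine ⟨p, hp, ?_⟩
    rw [div_mul_eq_mul_div, le_div_iff₀ (sub_pos.2 hα)]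
    linarith

end OnlineTree

/-- Let `d` be an `α`-HST metric on `n` points (an ultrametric whose distinct
positive distances are separated by factors of at least `α`), with points
arriving in index order. The online algorithm connects each arriving point `i`
(other than the first) to the earliest-arrived point among its nearest earlier
neighbors, `parent i`, producing a spanning tree `H`. Then for every pair `u,v`,
`d_H(u,v) ≤ 2·(α/(α−1))·d(u,v)`. -/
theorem hst_online_tree_stretch (n : ℕ) (d : Fin n → Fin n → ℝ)
    (hsymm : ∀ u v, d u v = d v u) (hself : ∀ u, d u u = 0)
    (hpos : ∀ u v, u ≠ v → 0 < d u v)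
    (hult : ∀ x y z, d x z ≤ max (d x y) (d y z))
    (α : ℝ) (hα : 1 < α)
    (hHST : ∀ u v x y, 0 < d u v → 0 < d x y → d u v < d x y → α * d u v ≤ d x y)
    (parent : Fin n → Fin n)
    (hpar : ∀ i : Fin n, 0 < (i : ℕ) →
      parent i < i ∧ (∀ j : Fin n, j < i → d (parent i) i ≤ d j i) ∧
        (∀ j : Fin n, j < i → d j i = d (parent i) i → parent i ≤ j)) :
    ∀ u v : Fin n, ∃ p : List (Fin n),
      p.head? = some u ∧ p.getLast? = some v ∧
      List.Chain' (fun (x y : Fin n) =>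
        (0 < (x : ℕ) ∧ parent x = y) ∨ (0 < (y : ℕ) ∧ parent y = x)) p ∧
      rPath d p ≤ 2 * (α / (α - 1)) * d u v := by
  intro u v
  have hu : d u u ≤ d u v := (hself u).trans_le (nonneg_of_ultrametric hsymm hself hult u v)
  have hv : d v v ≤ d u v := (hself v).trans_le (nonneg_of_ultrametric hsymm hself hult u v)
  obtain ⟨c, hcu⟩ : ∃ c, IsLeast {j | d j u ≤ d u v} c :=
    (Set.toFinite _).isCompact.exists_isLeast ⟨u, hu⟩
  have hcv : IsLeast {j | d j v ≤ d u v} c := by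
    rwa [setOf_le_eq_of_le hsymm hult (hsymm v u).le]
  obtain ⟨p, hp, hpw⟩ :=
    exists_parentAdj_path_to_isLeast hsymm hself hpos hult hα hHST hpar u hcu (hcu.2 hu)
  obtain ⟨q, hq, hqw⟩ :=
    exists_parentAdj_path_to_isLeast hsymm hself hpos hult hα hHST hpar v hcv (hcv.2 hv)
  obtain ⟨s, ⟨hsu, hsv, hs⟩, hsw⟩ := hp.exists_join d (fun _ _ => Or.symm) hsymm hq
  exact ⟨s, hsu, hsv, hs, by linarith⟩
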